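/- arXiv:2412.19258 — 2 statements merged into one kernel-verified Lean document; each statement's English description precedes it below -/
import Mathlib

section
/- Let G and H be nontrivial connected graphs and S ⊆ V(G □ H). If there exist g ∈ V(G) and h ∈ V(H) such that both the G-layer V(G)×{h} and the H-layer {g}×V(H) are contained in the cycle convex hull of S, then S is a cycle hull set of G □ H, i.e., the cycle convex hull of S equals V(G □ H). -/
/-!
A cycle convex set `T` of `G □ H` is closed under completing squares: if three corners of a
square `(a, b), (c, b), (c, b'), (a, b')` lie in `T`, so does the fourth, since otherwise the
square is a 4-cycle through a vertex outside `T`. Once a whole `G`-layer `V(G) × {b}` lies in `T`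
and `H.Adj b b'`, the vertex `(g, b')` of the `H`-layer through `g` spreads along a `G`-walk to the
whole layer `V(G) × {b'}`. Walking in `H` from `h` then fills every `G`-layer.
-/

open SimpleGraph

variable {V α β : Type*}

/-- A set `S` is cycle convex in `G` if no vertex outside `S` lies on a cycle in the
subgraph induced by `S ∪ {w}`. -/
def CycleConvex (G : SimpleGraph V) (S : Set V) : Prop :=
  ∀ w : V, w ∉ S →
    ∀ c : (G.induce (insert w S)).Walk ⟨w, Set.mem_insert w S⟩ ⟨w, Set.mem_insert w S⟩,
      ¬ c.IsCycle

/-- The cycle convex hull of `S`: the smallest cycle convex set containing `S`. -/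
def cycleHull (G : SimpleGraph V) (S : Set V) : Set V :=
  ⋂₀ {T : Set V | S ⊆ T ∧ CycleConvex G T}

/-- The cycle hull number: minimum size of a set whose cycle convex hull is everything. -/
noncomputable def cycleHullNumber (G : SimpleGraph V) : ℕ :=
  sInf {n : ℕ | ∃ S : Set V, S.ncard = n ∧ cycleHull G S = Set.univ}

/-- The cycle convexity number: maximum size of a proper cycle convex set. -/
noncomputable def cycleConvexityNumber (G : SimpleGraph V) : ℕ :=
  sSup {n : ℕ | ∃ S : Set V, S.ncard = n ∧ CycleConvex G S ∧ S ≠ Set.univ}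

/-- The independence number of a graph. -/
noncomputable def indepNumber (G : SimpleGraph V) : ℕ :=
  sSup {n : ℕ | ∃ S : Set V, S.ncard = n ∧ S.Pairwise fun a b => ¬ G.Adj a b}

/-- The strong product of two simple graphs. -/
def strongProd (G : SimpleGraph α) (H : SimpleGraph β) : SimpleGraph (α × β) where
  Adj x y := (G.Adj x.1 y.1 ∧ x.2 = y.2) ∨ (x.1 = y.1 ∧ H.Adj x.2 y.2) ∨
    (G.Adj x.1 y.1 ∧ H.Adj x.2 y.2)
  symm := ⟨fun x y h => by
    rcases h with ⟨h1, h2⟩ | ⟨h1, h2⟩ | ⟨h1, h2⟩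
    · exact Or.inl ⟨h1.symm, h2.symm⟩
    · exact Or.inr (Or.inl ⟨h1.symm, h2.symm⟩)
    · exact Or.inr (Or.inr ⟨h1.symm, h2.symm⟩)⟩
  loopless := ⟨fun x h => by
    rcases h with ⟨h1, _⟩ | ⟨_, h2⟩ | ⟨h1, _⟩
    · exact G.loopless.irrefl _ h1
    · exact H.loopless.irrefl _ h2
    · exact G.loopless.irrefl _ h1⟩

/-- The lexicographic product of two simple graphs. -/
def lexProd (G : SimpleGraph α) (H : SimpleGraph β) : SimpleGraph (α × β) where
  Adj x y := G.Adj x.1 y.1 ∨ (x.1 = y.1 ∧ H.Adj x.2 y.2)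
  symm := ⟨fun x y h => by
    rcases h with h1 | ⟨h1, h2⟩
    · exact Or.inl h1.symm
    · exact Or.inr ⟨h1.symm, h2.symm⟩⟩
  loopless := ⟨fun x h => by
    rcases h with h1 | ⟨_, h2⟩
    · exact G.loopless.irrefl _ h1
    · exact H.loopless.irrefl _ h2⟩

namespace CycleConvex

variable {G : SimpleGraph V} {T : Set V}

theorem mem_of_isCycle (hT : CycleConvex G T) {w : V} (c : G.Walk w w) (hc : c.IsCycle)
    (hsupp : ∀ x ∈ c.support, x ∈ insert w T) : w ∈ T := by
  by_contra hw
  refine hT w hw (c.induce _ hsupp) ?_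
  rw [← Walk.map_induce c hsupp] at hc
  exact (Walk.isCycle_map_iff_of_injective (Embedding.induce (G := G) _).injective).1 hc

theorem mem_of_adj_of_adj_of_adj_of_adj (hT : CycleConvex G T) {w x y z : V}
    (hwx : G.Adj w x) (hxy : G.Adj x y) (hyz : G.Adj y z) (hzw : G.Adj z w)
    (hwy : w ≠ y) (hxz : x ≠ z) (hx : x ∈ T) (hy : y ∈ T) (hz : z ∈ T) : w ∈ T := by
  refine hT.mem_of_isCycle (.cons hwx (.cons hxy (.cons hyz (.cons hzw .nil)))) ?_ ?_
  · rw [Walk.cons_isCycle_iff]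
    simp [hwx.ne.symm, hxy.ne, hyz.ne, hzw.ne, hwy, hwy.symm, hxz]
  · simp [hx, hy, hz]

end CycleConvex

theorem cycleConvex_cycleHull (G : SimpleGraph V) (S : Set V) :
    CycleConvex G (cycleHull G S) := by
  intro w hw c hc
  obtain ⟨T, hST, hT, hwT⟩ : ∃ T, S ⊆ T ∧ CycleConvex G T ∧ w ∉ T := by
    simpa [cycleHull] using hw
  have hsub : insert w (cycleHull G S) ⊆ insert w T :=
    Set.insert_subset_insert fun x hx => Set.mem_sInter.1 hx T ⟨hST, hT⟩
  exact hT w hwT (c.map (G.induceHomOfLE hsub).toHom) (hc.map (G.induceHomOfLE hsub).injective)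

namespace CycleConvex

variable {G : SimpleGraph α} {H : SimpleGraph β} {T : Set (α × β)}

theorem boxProd_mem_of_square (hT : CycleConvex (G □ H) T) {a c : α} {b b' : β}
    (hac : G.Adj a c) (hbb' : H.Adj b b')
    (hab : (a, b) ∈ T) (hcb : (c, b) ∈ T) (hcb' : (c, b') ∈ T) : (a, b') ∈ T :=
  hT.mem_of_adj_of_adj_of_adj_of_adj (boxProd_adj_right.2 hbb'.symm) (boxProd_adj_left.2 hac)
    (boxProd_adj_right.2 hbb') (boxProd_adj_left.2 hac.symm)
    (by simp [hac.ne]) (by simp [hac.ne]) hab hcb hcb'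

theorem boxProd_layer_of_adj (hT : CycleConvex (G □ H) T) (hG : G.Preconnected) {g : α}
    {b b' : β} (hbb' : H.Adj b b') (hb : ∀ a, (a, b) ∈ T) (hgb' : (g, b') ∈ T) (a : α) :
    (a, b') ∈ T := by
  obtain ⟨p⟩ := hG a g
  induction p with
  | nil => exact hgb'
  | cons hac _ ih => exact hT.boxProd_mem_of_square hac hbb' (hb _) (hb _) (ih hgb')

theorem boxProd_eq_univ (hT : CycleConvex (G □ H) T) (hG : G.Preconnected)
    (hH : H.Preconnected)
    {g : α} {h : β} (hGlayer : ∀ a, (a, h) ∈ T) (hHlayer : ∀ b, (g, b) ∈ T) :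
    T = Set.univ := by
  refine Set.eq_univ_of_forall fun ⟨a, b⟩ => ?_
  obtain ⟨p⟩ := hH b h
  induction p generalizing a with
  | nil => exact hGlayer a
  | cons hbb' _ ih => exact hT.boxProd_layer_of_adj hG hbb'.symm (ih hGlayer) (hHlayer _) a

end CycleConvex

theorem stmt_6_general (G : SimpleGraph α) (H : SimpleGraph β)
    (hG : G.Connected) (hH : H.Connected)
    (S : Set (α × β)) (g : α) (h : β)
    (hGlayer : (Set.univ ×ˢ {h} : Set (α × β)) ⊆ cycleHull (G □ H) S)
    (hHlayer : ({g} ×ˢ Set.univ : Set (α × β)) ⊆ cycleHull (G □ H) S) :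
    cycleHull (G □ H) S = Set.univ :=
  (cycleConvex_cycleHull _ S).boxProd_eq_univ hG.preconnected hH.preconnected
    (fun _ => hGlayer (Set.mk_mem_prod trivial rfl)) (fun _ => hHlayer (Set.mk_mem_prod rfl trivial))

theorem stmt_6 [Fintype α] [Fintype β] (G : SimpleGraph α) (H : SimpleGraph β)
    [Nontrivial α] [Nontrivial β] (hG : G.Connected) (hH : H.Connected)
    (S : Set (α × β)) (g : α) (h : β)
    (hGlayer : (Set.univ ×ˢ {h} : Set (α × β)) ⊆ cycleHull (G □ H) S)
    (hHlayer : ({g} ×ˢ Set.univ : Set (α × β)) ⊆ cycleHull (G □ H) S) :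
    cycleHull (G □ H) S = Set.univ :=
  stmt_6_general G H hG hH S g h hGlayer hHlayer
end

section
/- Let G and H be nontrivial connected graphs. Then max{hn_cc(G), hn_cc(H), 3} ≤ hn_cc(G □ H) ≤ hn_cc(G) + hn_cc(H) − 1, where hn_cc denotes the cycle hull number and □ the Cartesian product. -/
open SimpleGraph

variable {V α β : Type*}

section AuxProof

open SimpleGraph

variable {W : Type*} {Γ : SimpleGraph W}

lemma cycle_destruct {v : W} {c : Γ.Walk v v} (hc : c.IsCycle) :
    ∃ (u₁ u₂ : W), Γ.Adj v u₁ ∧ Γ.Adj v u₂ ∧ u₁ ≠ u₂ ∧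
      ∃ p : Γ.Walk u₁ u₂, v ∉ p.support := by
  obtain ⟨u₁, h1, q, rfl⟩ : ∃ u₁, ∃ h1 : Γ.Adj v u₁, ∃ q : Γ.Walk u₁ v, c = Walk.cons h1 q := by
    cases c with
    | nil => simp at hc
    | cons h q => exact ⟨_, h, q, rfl⟩
  rw [Walk.cons_isCycle_iff] at hc
  obtain ⟨hq, he⟩ := hc
  have hqr : q.reverse.IsPath := hq.reverse
  obtain ⟨u₂, h2, r, hr⟩ : ∃ u₂, ∃ h2 : Γ.Adj v u₂, ∃ r : Γ.Walk u₂ u₁,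
      q.reverse = Walk.cons h2 r := by
    generalize hg : q.reverse = qr
    cases qr with
    | nil => exact absurd h1 (Γ.irrefl)
    | cons h r => exact ⟨_, h, r, rfl⟩
  rw [hr, Walk.cons_isPath_iff] at hqr
  obtain ⟨hrp, hvr⟩ := hqr
  refine ⟨u₁, u₂, h1, h2, ?_, r.reverse, by simp [Walk.support_reverse]; exact hvr⟩
  intro heq
  apply he
  have hmem : s(v, u₂) ∈ q.reverse.edges := by rw [hr]; simp
  rw [Walk.edges_reverse, List.mem_reverse] at hmem
  have hs : s(v, u₁) = s(v, u₂) := by rw [heq]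
  rw [hs]
  exact hmem

lemma cycle_construct {v u₁ u₂ : W} (h1 : Γ.Adj v u₁) (h2 : Γ.Adj v u₂) (hne : u₁ ≠ u₂)
    (p : Γ.Walk u₁ u₂) (hv : v ∉ p.support) : ∃ c : Γ.Walk v v, c.IsCycle := by
  classical
  have hq : (p.toPath : Γ.Walk u₁ u₂).IsPath := p.toPath.2
  set q : Γ.Walk u₁ u₂ := (p.toPath : Γ.Walk u₁ u₂) with hqdef
  have hvq : v ∉ q.support := fun h => hv (Walk.support_toPath_subset p h)
  refine ⟨Walk.cons h1 (q.concat h2.symm), ?_⟩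
  rw [Walk.cons_isCycle_iff]
  constructor
  · rw [← Walk.isPath_reverse_iff, Walk.reverse_concat]
    exact (hq.reverse).cons (by simp [Walk.support_reverse]; exact hvq)
  · intro hmem
    rw [Walk.edges_concat, List.concat_eq_append, List.mem_append, List.mem_singleton] at hmem
    rcases hmem with hmem | hmem
    · exact hvq (Walk.fst_mem_support_of_mem_edges q hmem)
    · rw [Sym2.eq_iff] at hmem
      rcases hmem with ⟨rfl, _⟩ | ⟨_, rfl⟩
      · exact Γ.irrefl h2
      · exact hne rfl

lemma isCycle_square {v0 v1 v2 v3 : W} (e01 : Γ.Adj v0 v1) (e12 : Γ.Adj v1 v2)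
    (e23 : Γ.Adj v2 v3) (e30 : Γ.Adj v3 v0) (h02 : v0 ≠ v2) (h13 : v1 ≠ v3) :
    (Walk.cons e01 (Walk.cons e12 (Walk.cons e23 (Walk.cons e30 Walk.nil)))).IsCycle := by
  have h01 := e01.ne
  have h12 := e12.ne
  have h23 := e23.ne
  have h30 := e30.ne
  rw [Walk.cons_isCycle_iff]
  constructor
  · simp only [Walk.cons_isPath_iff, Walk.support_cons, Walk.support_nil, List.mem_cons,
      List.mem_singleton, List.not_mem_nil, or_false]
    aesop
  · simp only [Walk.edges_cons, Walk.edges_nil, List.mem_cons, List.not_mem_nil, or_false,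
      Sym2.eq_iff]
    aesop

variable {V α β : Type*}

lemma subset_cycleHull (G : SimpleGraph V) (S : Set V) : S ⊆ cycleHull G S :=
  fun _ hx _ hT => hT.1 hx

lemma cycleHull_subset {G : SimpleGraph V} {S T : Set V} (hST : S ⊆ T) (hT : CycleConvex G T) :
    cycleHull G S ⊆ T := Set.sInter_subset_of_mem ⟨hST, hT⟩

lemma cycleHull_univ (G : SimpleGraph V) : cycleHull G Set.univ = Set.univ :=
  Set.eq_univ_of_univ_subset (subset_cycleHull G _)

lemma exists_min_hull_set (G : SimpleGraph V) :
    ∃ S : Set V, S.ncard = cycleHullNumber G ∧ cycleHull G S = Set.univ :=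
  Nat.sInf_mem (⟨(Set.univ : Set V).ncard, Set.univ, rfl, cycleHull_univ G⟩ :
    Set.Nonempty {n : ℕ | ∃ S : Set V, S.ncard = n ∧ cycleHull G S = Set.univ})

lemma hullNumber_le {G : SimpleGraph V} {S : Set V} (h : cycleHull G S = Set.univ) :
    cycleHullNumber G ≤ S.ncard := Nat.sInf_le ⟨S, rfl, h⟩

lemma exists_proper_convex {G : SimpleGraph V} {S : Set V} (h : cycleHull G S ≠ Set.univ) :
    ∃ T, S ⊆ T ∧ CycleConvex G T ∧ T ≠ Set.univ := by
  by_contra hc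
  push_neg at hc
  apply h
  refine Set.eq_univ_iff_forall.2 fun x => ?_
  intro T hT
  rw [hc T hT.1 hT.2]
  trivial

lemma mem_of_ne_root {w : V} {S : Set V}
    {u : ↥(insert w S)} (hu : u ≠ (⟨w, Set.mem_insert w S⟩ : ↥(insert w S))) : u.val ∈ S := by
  rcases u.2 with h | h
  · exact absurd (Subtype.ext h) hu
  · exact h

lemma convex_subsingleton {G : SimpleGraph V} {S : Set V} (hS : S.Subsingleton) :
    CycleConvex G S := by
  intro w hw c hc
  obtain ⟨u₁, u₂, h1, h2, hne, p, hvp⟩ := cycle_destruct hc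
  exact hne (Subtype.ext (hS (mem_of_ne_root h1.ne') (mem_of_ne_root h2.ne')))

end AuxProof

section AuxProd
open SimpleGraph
variable {α β : Type*} {G : SimpleGraph α} {H : SimpleGraph β}

lemma convex_preimage_fst {T : Set α} (hT : CycleConvex G T) :
    CycleConvex (G □ H) (Prod.fst ⁻¹' T) := by
  rintro ⟨a, e⟩ hw c hc
  have hw' : a ∉ T := hw
  obtain ⟨u₁, u₂, h1, h2, hne, p, hvp⟩ := cycle_destruct hc
  have hu1 : u₁.val.1 ∈ T := mem_of_ne_root h1.ne'
  have hu2 : u₂.val.1 ∈ T := mem_of_ne_root h2.ne'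
  have hadj : ∀ u : ↥(insert ((a,e) : α × β) (Prod.fst ⁻¹' T)),
      ((G □ H).induce (insert ((a,e) : α × β) (Prod.fst ⁻¹' T))).Adj
        ⟨(a,e), Set.mem_insert _ _⟩ u → u.val.1 ∈ T →
      G.Adj a u.val.1 ∧ u.val.2 = e := by
    intro u h huT
    have h' : (G □ H).Adj (a, e) u.val := h
    rcases boxProd_adj.mp h' with ⟨hg, hs⟩ | ⟨hh, hs⟩
    · exact ⟨hg, hs.symm⟩
    · exact absurd (by rw [show a = u.val.1 from hs]; exact huT : a ∈ T) hw'
  obtain ⟨hg1, hs1⟩ := hadj u₁ h1 hu1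
  obtain ⟨hg2, hs2⟩ := hadj u₂ h2 hu2
  have hfst : u₁.val.1 ≠ u₂.val.1 := by
    intro h
    exact hne (Subtype.ext (Prod.ext h (hs1.trans hs2.symm)))
  have key : ∀ {z₁ z₂ : ↥(insert ((a,e) : α × β) (Prod.fst ⁻¹' T))}
      (q : ((G □ H).induce (insert ((a,e) : α × β) (Prod.fst ⁻¹' T))).Walk z₁ z₂),
      (⟨(a,e), Set.mem_insert _ _⟩ : ↥(insert ((a,e) : α × β) (Prod.fst ⁻¹' T))) ∉ q.support →
      ∀ (hz₁ : z₁.val.1 ∈ T) (hz₂ : z₂.val.1 ∈ T),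
      (G.induce T).Reachable ⟨z₁.val.1, hz₁⟩ ⟨z₂.val.1, hz₂⟩ := by
    intro z₁ z₂ q
    induction q with
    | nil => exact fun _ _ _ => Reachable.refl _
    | @cons x y z h q ih =>
      intro hsup hx hz
      rw [Walk.support_cons, List.mem_cons] at hsup
      push_neg at hsup
      obtain ⟨hvx, hvq⟩ := hsup
      have hyT : y.val.1 ∈ T :=
        mem_of_ne_root (fun h' => hvq (h' ▸ q.start_mem_support))
      have h' : (G □ H).Adj x.val y.val := h
      rcases boxProd_adj.mp h' with ⟨hg, hs⟩ | ⟨hh, hs⟩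
      · have hadj' : (G.induce T).Adj ⟨x.val.1, hx⟩ ⟨y.val.1, hyT⟩ := hg
        exact hadj'.reachable.trans (ih hvq hyT hz)
      · have hxy : (⟨x.val.1, hx⟩ : ↥T) = ⟨y.val.1, hyT⟩ := Subtype.ext hs
        rw [hxy]
        exact ih hvq hyT hz
  obtain ⟨p₀⟩ := key p hvp hu1 hu2
  let f : (G.induce T) →g (G.induce (insert a T)) :=
    ⟨fun x => ⟨x.val, Set.mem_insert_of_mem _ x.2⟩, fun {x y} h => h⟩
  have hxa1 : (G.induce (insert a T)).Adj ⟨a, Set.mem_insert a T⟩ (f ⟨u₁.val.1, hu1⟩) := hg1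
  have hxa2 : (G.induce (insert a T)).Adj ⟨a, Set.mem_insert a T⟩ (f ⟨u₂.val.1, hu2⟩) := hg2
  have hnep : f ⟨u₁.val.1, hu1⟩ ≠ f ⟨u₂.val.1, hu2⟩ :=
    fun h => hfst (congrArg Subtype.val h)
  have havoid : (⟨a, Set.mem_insert a T⟩ : ↥(insert a T)) ∉ (p₀.map f).support := by
    intro hmem
    rw [Walk.support_map, List.mem_map] at hmem
    obtain ⟨x, _, hx⟩ := hmem
    apply hw'
    have hxa : x.val = a := congrArg Subtype.val hx
    rw [← hxa]
    exact x.2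
  obtain ⟨c', hc'⟩ := cycle_construct hxa1 hxa2 hnep (p₀.map f) havoid
  exact hT a hw' c' hc'

lemma convex_preimage_snd {T : Set β} (hT : CycleConvex H T) :
    CycleConvex (G □ H) (Prod.snd ⁻¹' T) := by
  rintro ⟨e, a⟩ hw c hc
  have hw' : a ∉ T := hw
  obtain ⟨u₁, u₂, h1, h2, hne, p, hvp⟩ := cycle_destruct hc
  have hu1 : u₁.val.2 ∈ T := mem_of_ne_root h1.ne'
  have hu2 : u₂.val.2 ∈ T := mem_of_ne_root h2.ne'
  have hadj : ∀ u : ↥(insert ((e,a) : α × β) (Prod.snd ⁻¹' T)),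
      ((G □ H).induce (insert ((e,a) : α × β) (Prod.snd ⁻¹' T))).Adj
        ⟨(e,a), Set.mem_insert _ _⟩ u → u.val.2 ∈ T →
      H.Adj a u.val.2 ∧ u.val.1 = e := by
    intro u h huT
    have h' : (G □ H).Adj (e, a) u.val := h
    rcases boxProd_adj.mp h' with ⟨hg, hs⟩ | ⟨hh, hs⟩
    · exact absurd (by rw [show a = u.val.2 from hs]; exact huT : a ∈ T) hw'
    · exact ⟨hh, hs.symm⟩
  obtain ⟨hg1, hs1⟩ := hadj u₁ h1 hu1
  obtain ⟨hg2, hs2⟩ := hadj u₂ h2 hu2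
  have hfst : u₁.val.2 ≠ u₂.val.2 := by
    intro h
    exact hne (Subtype.ext (Prod.ext (hs1.trans hs2.symm) h))
  have key : ∀ {z₁ z₂ : ↥(insert ((e,a) : α × β) (Prod.snd ⁻¹' T))}
      (q : ((G □ H).induce (insert ((e,a) : α × β) (Prod.snd ⁻¹' T))).Walk z₁ z₂),
      (⟨(e,a), Set.mem_insert _ _⟩ : ↥(insert ((e,a) : α × β) (Prod.snd ⁻¹' T))) ∉ q.support →
      ∀ (hz₁ : z₁.val.2 ∈ T) (hz₂ : z₂.val.2 ∈ T),
      (H.induce T).Reachable ⟨z₁.val.2, hz₁⟩ ⟨z₂.val.2, hz₂⟩ := by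
    intro z₁ z₂ q
    induction q with
    | nil => exact fun _ _ _ => Reachable.refl _
    | @cons x y z h q ih =>
      intro hsup hx hz
      rw [Walk.support_cons, List.mem_cons] at hsup
      push_neg at hsup
      obtain ⟨hvx, hvq⟩ := hsup
      have hyT : y.val.2 ∈ T :=
        mem_of_ne_root (fun h' => hvq (h' ▸ q.start_mem_support))
      have h' : (G □ H).Adj x.val y.val := h
      rcases boxProd_adj.mp h' with ⟨hg, hs⟩ | ⟨hh, hs⟩
      · have hxy : (⟨x.val.2, hx⟩ : ↥T) = ⟨y.val.2, hyT⟩ := Subtype.ext hs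
        rw [hxy]
        exact ih hvq hyT hz
      · have hadj' : (H.induce T).Adj ⟨x.val.2, hx⟩ ⟨y.val.2, hyT⟩ := hh
        exact hadj'.reachable.trans (ih hvq hyT hz)
  obtain ⟨p₀⟩ := key p hvp hu1 hu2
  let f : (H.induce T) →g (H.induce (insert a T)) :=
    ⟨fun x => ⟨x.val, Set.mem_insert_of_mem _ x.2⟩, fun {x y} h => h⟩
  have hxa1 : (H.induce (insert a T)).Adj ⟨a, Set.mem_insert a T⟩ (f ⟨u₁.val.2, hu1⟩) := hg1
  have hxa2 : (H.induce (insert a T)).Adj ⟨a, Set.mem_insert a T⟩ (f ⟨u₂.val.2, hu2⟩) := hg2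
  have hnep : f ⟨u₁.val.2, hu1⟩ ≠ f ⟨u₂.val.2, hu2⟩ :=
    fun h => hfst (congrArg Subtype.val h)
  have havoid : (⟨a, Set.mem_insert a T⟩ : ↥(insert a T)) ∉ (p₀.map f).support := by
    intro hmem
    rw [Walk.support_map, List.mem_map] at hmem
    obtain ⟨x, _, hx⟩ := hmem
    apply hw'
    have hxa : x.val = a := congrArg Subtype.val hx
    rw [← hxa]
    exact x.2
  obtain ⟨c', hc'⟩ := cycle_construct hxa1 hxa2 hnep (p₀.map f) havoid
  exact hT a hw' c' hc'

lemma convex_layer_fst {T : Set (α × β)} (hT : CycleConvex (G □ H) T) (b : β) :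
    CycleConvex G {x : α | (x, b) ∈ T} := by
  intro a ha c hc
  have ha' : (a, b) ∉ T := ha
  let f : (G.induce (insert a {x : α | (x, b) ∈ T})) →g ((G □ H).induce (insert (a,b) T)) :=
    ⟨fun x => ⟨(x.val, b), by
        rcases x.2 with h | h
        · rw [h]; exact Set.mem_insert _ _
        · exact Set.mem_insert_of_mem _ h⟩,
     fun {x y} h => boxProd_adj.mpr (Or.inl ⟨h, rfl⟩)⟩
  have hfinj : Function.Injective f := by
    intro x y hxy
    apply Subtype.ext
    exact ((Prod.mk.injEq _ _ _ _).mp (congrArg Subtype.val hxy)).1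
  exact hT (a, b) ha' (c.map f) ((Walk.map_isCycle_iff_of_injective hfinj).mpr hc)

lemma convex_layer_snd {T : Set (α × β)} (hT : CycleConvex (G □ H) T) (a : α) :
    CycleConvex H {y : β | (a, y) ∈ T} := by
  intro b hb c hc
  have hb' : (a, b) ∉ T := hb
  let f : (H.induce (insert b {y : β | (a, y) ∈ T})) →g ((G □ H).induce (insert (a,b) T)) :=
    ⟨fun y => ⟨(a, y.val), by
        rcases y.2 with h | h
        · rw [h]; exact Set.mem_insert _ _
        · exact Set.mem_insert_of_mem _ h⟩,
     fun {x y} h => boxProd_adj.mpr (Or.inr ⟨h, rfl⟩)⟩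
  have hfinj : Function.Injective f := by
    intro x y hxy
    apply Subtype.ext
    exact ((Prod.mk.injEq _ _ _ _).mp (congrArg Subtype.val hxy)).2
  exact hT (a, b) hb' (c.map f) ((Walk.map_isCycle_iff_of_injective hfinj).mpr hc)

lemma convex_pair {u v : α × β} (h1 : u.1 ≠ v.1) (h2 : u.2 ≠ v.2) :
    CycleConvex (G □ H) {u, v} := by
  intro w hw c hc
  obtain ⟨z₁, z₂, hz1, hz2, hne, p, hvp⟩ := cycle_destruct hc
  have hnadj : ∀ x y : α × β, x ∈ ({u, v} : Set (α × β)) → y ∈ ({u, v} : Set (α × β)) →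
      ¬ (G □ H).Adj x y := by
    intro x y hx hy hadj
    have hxy := hadj.ne
    rcases boxProd_adj.mp hadj with ⟨_, hs⟩ | ⟨_, hs⟩ <;>
      rcases hx with rfl | rfl <;> rcases hy with rfl | rfl <;> simp_all
  cases p with
  | nil => exact hne rfl
  | cons h q =>
    rw [Walk.support_cons, List.mem_cons] at hvp
    push_neg at hvp
    have hm := mem_of_ne_root (fun h' => hvp.2 (h' ▸ q.start_mem_support))
    have hz₁m : z₁.val ∈ ({u, v} : Set (α × β)) := mem_of_ne_root hz1.ne'
    exact hnadj _ _ hz₁m hm h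

lemma fill_inner {T : Set (α × β)} (hTc : CycleConvex (G □ H) T) {y c : β}
    (hadj : H.Adj y c) (hcolc : ∀ x, (x, c) ∈ T) :
    ∀ (x aa : α) (w : G.Walk x aa), (aa, y) ∈ T → (x, y) ∈ T := by
  intro x aa w
  induction w with
  | nil => exact id
  | @cons x m aa h q ih =>
    intro haa
    have hm : (m, y) ∈ T := ih haa
    by_contra hxy
    have m1 : (x, c) ∈ T := hcolc x
    have m2 : (m, c) ∈ T := hcolc m
    let w0 : ↥(insert ((x, y) : α × β) T) := ⟨(x, y), Set.mem_insert _ _⟩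
    let w1 : ↥(insert ((x, y) : α × β) T) := ⟨(x, c), Set.mem_insert_of_mem _ m1⟩
    let w2 : ↥(insert ((x, y) : α × β) T) := ⟨(m, c), Set.mem_insert_of_mem _ m2⟩
    let w3 : ↥(insert ((x, y) : α × β) T) := ⟨(m, y), Set.mem_insert_of_mem _ hm⟩
    have e01 : ((G □ H).induce (insert ((x, y) : α × β) T)).Adj w0 w1 :=
      boxProd_adj.mpr (Or.inr ⟨hadj, rfl⟩)
    have e12 : ((G □ H).induce (insert ((x, y) : α × β) T)).Adj w1 w2 :=
      boxProd_adj.mpr (Or.inl ⟨h, rfl⟩)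
    have e23 : ((G □ H).induce (insert ((x, y) : α × β) T)).Adj w2 w3 :=
      boxProd_adj.mpr (Or.inr ⟨hadj.symm, rfl⟩)
    have e30 : ((G □ H).induce (insert ((x, y) : α × β) T)).Adj w3 w0 :=
      boxProd_adj.mpr (Or.inl ⟨h.symm, rfl⟩)
    have h02 : w0 ≠ w2 := fun hh => h.ne (congrArg (fun z => z.val.1) hh)
    have h13 : w1 ≠ w3 := fun hh => hadj.ne' (congrArg (fun z => z.val.2) hh)
    exact hTc (x, y) hxy _ (isCycle_square e01 e12 e23 e30 h02 h13)

lemma fill {T : Set (α × β)} {a : α} (hTc : CycleConvex (G □ H) T)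
    (hGc : G.Preconnected) :
    ∀ (y bb : β) (w : H.Walk y bb), (∀ x, (x, bb) ∈ T) → (∀ z, (a, z) ∈ T) →
      ∀ x, (x, y) ∈ T := by
  intro y bb w
  induction w with
  | nil => exact fun hrow _ x => hrow x
  | @cons y c bb h q ih =>
    intro hrow hcol x
    have hcolc : ∀ x', (x', c) ∈ T := ih hrow hcol
    obtain ⟨w2⟩ := hGc x a
    exact fill_inner hTc h hcolc x a w2 (hcol y)

end AuxProd

theorem stmt_7 [Fintype α] [Fintype β] (G : SimpleGraph α) (H : SimpleGraph β)
    [Nontrivial α] [Nontrivial β] (hG : G.Connected) (hH : H.Connected) :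
    max (cycleHullNumber G) (max (cycleHullNumber H) 3) ≤ cycleHullNumber (G □ H) ∧
    cycleHullNumber (G □ H) ≤ cycleHullNumber G + cycleHullNumber H - 1 := by
  classical
  obtain ⟨b0⟩ : Nonempty β := inferInstance
  obtain ⟨a0⟩ : Nonempty α := inferInstance
  constructor
  · -- lower bounds
    obtain ⟨S, hScard, hShull⟩ := exists_min_hull_set (G □ H)
    have hSfin : S.Finite := Set.toFinite S
    have contra : ∀ T : Set (α × β), S ⊆ T → CycleConvex (G □ H) T → T = Set.univ := by
      intro T h1 h2
      have hsub := cycleHull_subset h1 h2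
      rw [hShull] at hsub
      exact Set.eq_univ_of_univ_subset hsub
    have hcard4 : 4 ≤ Nat.card (α × β) := by
      rw [Nat.card_eq_fintype_card, Fintype.card_prod]
      have h1 := Fintype.one_lt_card (α := α)
      have h2 := Fintype.one_lt_card (α := β)
      nlinarith
    have hSneuniv_of : S.ncard < 4 → S ≠ Set.univ := by
      intro hlt heq
      rw [heq, Set.ncard_univ] at hlt
      omega
    rw [← hScard]
    have h3 : 3 ≤ S.ncard := by
      by_contra hle
      push_neg at hle
      have hne_univ : S ≠ Set.univ := hSneuniv_of (by omega)
      have hcases : S.ncard = 0 ∨ S.ncard = 1 ∨ S.ncard = 2 := by omega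
      rcases hcases with h0 | h1 | h2c
      · rw [Set.ncard_eq_zero] at h0
        exact hne_univ (contra S Set.Subset.rfl
          (convex_subsingleton (by rw [h0]; exact Set.subsingleton_empty)))
      · obtain ⟨u, hu⟩ := Set.ncard_eq_one.mp h1
        exact hne_univ (contra S Set.Subset.rfl
          (convex_subsingleton (by rw [hu]; exact Set.subsingleton_singleton)))
      · obtain ⟨u, v, huv, hS2⟩ := Set.ncard_eq_two.mp h2c
        by_cases hcc : u.2 = v.2
        · have hconv : CycleConvex (G □ H) (Prod.snd ⁻¹' {u.2}) :=
            convex_preimage_snd (convex_subsingleton Set.subsingleton_singleton)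
          have hsub : S ⊆ Prod.snd ⁻¹' {u.2} := by
            rw [hS2]
            rintro z (rfl | rfl)
            · rfl
            · exact hcc.symm
          have hTuniv := contra _ hsub hconv
          obtain ⟨b', hb'⟩ := exists_ne u.2
          have hmem : ((u.1, b') : α × β) ∈ Prod.snd ⁻¹' {u.2} := by
            rw [hTuniv]; trivial
          exact hb' hmem
        · by_cases hc1 : u.1 = v.1
          · have hconv : CycleConvex (G □ H) (Prod.fst ⁻¹' {u.1}) :=
              convex_preimage_fst (convex_subsingleton Set.subsingleton_singleton)
            have hsub : S ⊆ Prod.fst ⁻¹' {u.1} := by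
              rw [hS2]
              rintro z (rfl | rfl)
              · rfl
              · exact hc1.symm
            have hTuniv := contra _ hsub hconv
            obtain ⟨a', ha'⟩ := exists_ne u.1
            have hmem : ((a', u.2) : α × β) ∈ Prod.fst ⁻¹' {u.1} := by
              rw [hTuniv]; trivial
            exact ha' hmem
          · have hconv : CycleConvex (G □ H) ({u, v} : Set (α × β)) :=
              convex_pair hc1 hcc
            rw [← hS2] at hconv
            exact hne_univ (contra S Set.Subset.rfl hconv)
    have hGle : cycleHullNumber G ≤ S.ncard := by
      have hhull : cycleHull G (Prod.fst '' S) = Set.univ := by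
        by_contra hA
        obtain ⟨T, hAT, hTc, hTu⟩ := exists_proper_convex hA
        have hTuniv := contra (Prod.fst ⁻¹' T)
          (fun s hs => hAT ⟨s, hs, rfl⟩) (convex_preimage_fst hTc)
        apply hTu
        apply Set.eq_univ_iff_forall.2
        intro x
        have hmem : ((x, b0) : α × β) ∈ Prod.fst ⁻¹' T := by rw [hTuniv]; trivial
        exact hmem
      calc cycleHullNumber G ≤ (Prod.fst '' S).ncard := hullNumber_le hhull
        _ ≤ S.ncard := Set.ncard_image_le hSfin
    have hHle : cycleHullNumber H ≤ S.ncard := by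
      have hhull : cycleHull H (Prod.snd '' S) = Set.univ := by
        by_contra hA
        obtain ⟨T, hAT, hTc, hTu⟩ := exists_proper_convex hA
        have hTuniv := contra (Prod.snd ⁻¹' T)
          (fun s hs => hAT ⟨s, hs, rfl⟩) (convex_preimage_snd hTc)
        apply hTu
        apply Set.eq_univ_iff_forall.2
        intro y
        have hmem : ((a0, y) : α × β) ∈ Prod.snd ⁻¹' T := by rw [hTuniv]; trivial
        exact hmem
      calc cycleHullNumber H ≤ (Prod.snd '' S).ncard := hullNumber_le hhull
        _ ≤ S.ncard := Set.ncard_image_le hSfin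
    simp only [max_le_iff]
    exact ⟨hGle, hHle, h3⟩
  · -- upper bound
    obtain ⟨A, hAcard, hAhull⟩ := exists_min_hull_set G
    obtain ⟨B, hBcard, hBhull⟩ := exists_min_hull_set H
    have hAne : A.Nonempty := by
      rw [Set.nonempty_iff_ne_empty]
      rintro rfl
      have hsub : cycleHull G (∅ : Set α) ⊆ ∅ :=
        cycleHull_subset Set.Subset.rfl (convex_subsingleton Set.subsingleton_empty)
      rw [hAhull] at hsub
      exact hsub (Set.mem_univ a0)
    have hBne : B.Nonempty := by
      rw [Set.nonempty_iff_ne_empty]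
      rintro rfl
      have hsub : cycleHull H (∅ : Set β) ⊆ ∅ :=
        cycleHull_subset Set.Subset.rfl (convex_subsingleton Set.subsingleton_empty)
      rw [hBhull] at hsub
      exact hsub (Set.mem_univ b0)
    obtain ⟨a, ha⟩ := hAne
    obtain ⟨b, hb⟩ := hBne
    set S : Set (α × β) := ((fun x => (x, b)) '' A) ∪ ((fun y => (a, y)) '' B) with hSdef
    have hShull : cycleHull (G □ H) S = Set.univ := by
      apply Set.eq_univ_of_univ_subset
      rintro ⟨x, y⟩ -
      intro T hT
      obtain ⟨hST, hTc⟩ := hT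
      have hrow : ∀ x', ((x', b) : α × β) ∈ T := by
        have hconv := convex_layer_fst hTc b
        have hsub : A ⊆ {x' : α | (x', b) ∈ T} := fun x' hx' => hST (Or.inl ⟨x', hx', rfl⟩)
        have hh := cycleHull_subset hsub hconv
        rw [hAhull] at hh
        exact fun x' => hh (Set.mem_univ x')
      have hcol : ∀ y', ((a, y') : α × β) ∈ T := by
        have hconv := convex_layer_snd hTc a
        have hsub : B ⊆ {y' : β | (a, y') ∈ T} := fun y' hy' => hST (Or.inr ⟨y', hy', rfl⟩)
        have hh := cycleHull_subset hsub hconv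
        rw [hBhull] at hh
        exact fun y' => hh (Set.mem_univ y')
      obtain ⟨wH⟩ := hH.preconnected y b
      exact fill hTc hG.preconnected y b wH hrow hcol x
    have hab1 : ((a, b) : α × β) ∈ ((fun x => (x, b)) '' A) := ⟨a, ha, rfl⟩
    have hab2 : ((a, b) : α × β) ∈ ((fun y => (a, y)) '' B) := ⟨b, hb, rfl⟩
    have hinj1 : Function.Injective (fun x : α => ((x, b) : α × β)) :=
      fun x1 x2 h => congrArg Prod.fst h
    have hinj2 : Function.Injective (fun y : β => ((a, y) : α × β)) :=
      fun y1 y2 h => congrArg Prod.snd h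
    have hcount : S.ncard ≤ A.ncard + (B.ncard - 1) := by
      have hS' : S ⊆ ((fun x => (x, b)) '' A) ∪ (((fun y => (a, y)) '' B) \ {((a, b) : α × β)}) := by
        rintro z (hz | hz)
        · exact Or.inl hz
        · by_cases hzab : z = (a, b)
          · exact Or.inl (hzab ▸ hab1)
          · exact Or.inr ⟨hz, hzab⟩
      calc S.ncard ≤ _ := Set.ncard_le_ncard hS' (Set.toFinite _)
        _ ≤ ((fun x => (x, b)) '' A).ncard + (((fun y => (a, y)) '' B) \ {((a, b) : α × β)}).ncard :=
            Set.ncard_union_le _ _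
        _ = A.ncard + (((fun y => (a, y)) '' B).ncard - 1) := by
            rw [Set.ncard_image_of_injective _ hinj1, Set.ncard_diff_singleton_of_mem hab2]
        _ = A.ncard + (B.ncard - 1) := by rw [Set.ncard_image_of_injective _ hinj2]
    have hB1 : 1 ≤ B.ncard := (Set.ncard_pos (Set.toFinite _)).mpr ⟨b, hb⟩
    calc cycleHullNumber (G □ H) ≤ S.ncard := hullNumber_le hShull
      _ ≤ A.ncard + (B.ncard - 1) := hcount
      _ ≤ A.ncard + B.ncard - 1 := by omega
      _ = cycleHullNumber G + cycleHullNumber H - 1 := by rw [hAcard, hBcard]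
end
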